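/- Let τ ∈ (1/2, 1) and let f : ℝ → ℝ be continuous, supported in [−1/2, 1/2], with f(x) + f(x+τ) = 1 for −1/2 ≤ x ≤ 1/2 − τ, f = 1 on [1/2−τ, τ−1/2], and f even. Then for every integer m, ∫_ℝ f(x)·e^{2πi·mx/τ} dx = τ if m = 0 and 0 if m ≠ 0. -/

import Mathlib

open MeasureTheory intervalIntegral Complex

theorem rieffel_bump_integral (τ : ℝ) (hτ1 : 1/2 < τ) (hτ2 : τ < 1)
    (f : ℝ → ℝ) (hc : Continuous f)
    (hsupp : ∀ x : ℝ, x ∉ Set.Icc (-(1:ℝ)/2) (1/2) → f x = 0)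
    (hpart : ∀ x : ℝ, -(1:ℝ)/2 ≤ x → x ≤ 1/2 - τ → f x + f (x + τ) = 1)
    (hone : ∀ x : ℝ, 1/2 - τ ≤ x → x ≤ τ - 1/2 → f x = 1)
    (heven : ∀ x : ℝ, f (-x) = f x) (m : ℤ) :
    (∫ x : ℝ, (f x : ℂ) * Complex.exp (2 * Real.pi * Complex.I * m * x / τ)) =
      if m = 0 then (τ : ℂ) else 0 := by
  have hτ0 : (0:ℝ) < τ := lt_trans (by norm_num) hτ1
  set c : ℂ := 2 * Real.pi * Complex.I * m / τ with hc_def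
  have hexp : ∀ x : ℝ, (2 * Real.pi * Complex.I * m * x / τ : ℂ) = c * x := by
    intro x; rw [hc_def]; ring
  set g : ℝ → ℂ := fun x => (f x : ℂ) * Complex.exp (c * x) with hg_def
  have hgc : Continuous g :=
    (Complex.continuous_ofReal.comp hc).mul
      ((continuous_const.mul Complex.continuous_ofReal).cexp)
  have hgint : ∀ a b : ℝ, IntervalIntegrable g volume a b :=
    fun a b => hgc.intervalIntegrable a b
  have hcτ : c * τ = 2 * Real.pi * Complex.I * m := by
    rw [hc_def]; exact div_mul_cancel₀ _ (by exact_mod_cast hτ0.ne')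
  have hexp1 : Complex.exp (c * τ) = 1 := by
    rw [hcτ, show (2 * (Real.pi:ℂ) * Complex.I * m) = m * (2 * Real.pi * Complex.I) by ring]
    exact Complex.exp_int_mul_two_pi_mul_I m
  -- reduce to interval integral
  have step1 : (∫ x : ℝ, g x) = ∫ x in (-(1:ℝ)/2)..(1/2), g x := by
    rw [intervalIntegral.integral_of_le (by linarith), ← integral_Icc_eq_integral_Ioc]
    exact (setIntegral_eq_integral_of_forall_compl_eq_zero
      (fun x hx => by simp [hg_def, hsupp x hx])).symm
  -- split
  have hsplit : (∫ x in (-(1:ℝ)/2)..(1/2), g x) =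
      (∫ x in (-(1:ℝ)/2)..(1/2-τ), g x) + (∫ x in (1/2-τ)..(τ-1/2), g x)
        + (∫ x in (τ-1/2)..(1/2), g x) := by
    rw [integral_add_adjacent_intervals (hgint _ _) (hgint _ _),
      integral_add_adjacent_intervals (hgint _ _) (hgint _ _)]
  -- third piece
  have hthird : (∫ x in (τ-1/2)..(1/2), g x)
      = ∫ x in (-(1:ℝ)/2)..(1/2-τ), (f (x+τ) : ℂ) * Complex.exp (c * x) := by
    have := intervalIntegral.integral_comp_add_right (a := -(1:ℝ)/2) (b := 1/2-τ) g τ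
    rw [show (-(1:ℝ)/2 + τ) = τ - 1/2 by ring, show ((1:ℝ)/2 - τ + τ) = 1/2 by ring] at this
    rw [← this]
    apply intervalIntegral.integral_congr
    intro x _
    simp only [hg_def]
    rw [Complex.ofReal_add, mul_add, Complex.exp_add, hexp1, mul_one]
  have hfirst_third : (∫ x in (-(1:ℝ)/2)..(1/2-τ), g x) + (∫ x in (τ-1/2)..(1/2), g x)
      = ∫ x in (-(1:ℝ)/2)..(1/2-τ), Complex.exp (c * x) := by
    have h2 : IntervalIntegrable (fun x : ℝ => ((f (x + τ) : ℝ) : ℂ) * Complex.exp (c * x))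
        volume (-(1:ℝ)/2) (1/2-τ) := by
      apply Continuous.intervalIntegrable
      exact (Complex.continuous_ofReal.comp (hc.comp (continuous_id.add continuous_const))).mul
        ((continuous_const.mul Complex.continuous_ofReal).cexp)
    rw [hthird, ← intervalIntegral.integral_add (hgint _ _) h2]
    apply intervalIntegral.integral_congr
    intro x hx
    rw [Set.uIcc_of_le (by linarith)] at hx
    have h1 := hpart x hx.1 hx.2
    simp only [hg_def]
    rw [← add_mul]
    norm_cast
    rw [h1, Complex.ofReal_one, one_mul]
  have hmid : (∫ x in ((1:ℝ)/2-τ)..(τ-1/2), g x)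
      = ∫ x in ((1:ℝ)/2-τ)..(τ-1/2), Complex.exp (c * x) := by
    apply intervalIntegral.integral_congr
    intro x hx
    rw [Set.uIcc_of_le (by linarith)] at hx
    simp [hg_def, hone x hx.1 hx.2]
  have hcomb : (∫ x : ℝ, g x) = ∫ x in (-(1:ℝ)/2)..(τ-1/2), Complex.exp (c * x) := by
    rw [step1, hsplit, add_right_comm, hfirst_third, hmid,
      integral_add_adjacent_intervals (f := fun x : ℝ => Complex.exp (c * x))
        (((continuous_const.mul Complex.continuous_ofReal).cexp).intervalIntegrable _ _)
        (((continuous_const.mul Complex.continuous_ofReal).cexp).intervalIntegrable _ _)]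
  have hrw : (∫ x : ℝ, (f x : ℂ) * Complex.exp (2 * Real.pi * Complex.I * m * x / τ))
      = ∫ x : ℝ, g x := by
    congr 1; funext x; rw [hexp x]
  rw [hrw, hcomb]
  by_cases hm : m = 0
  · subst hm
    simp only [hc_def, Int.cast_zero, mul_zero, zero_div, if_true]
    simp only [zero_mul, Complex.exp_zero]
    rw [intervalIntegral.integral_const]
    push_cast
    ring_nf
    simp
  · rw [if_neg hm]
    have hc0 : c ≠ 0 := by
      rw [hc_def]
      apply div_ne_zero _ (by exact_mod_cast hτ0.ne')
      apply mul_ne_zero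
      apply mul_ne_zero
      · exact mul_ne_zero two_ne_zero (by exact_mod_cast Real.pi_ne_zero)
      · exact Complex.I_ne_zero
      · exact_mod_cast hm
    rw [integral_exp_mul_complex hc0]
    have : c * (τ - 1/2 : ℝ) = c * (-(1:ℝ)/2 : ℝ) + c * τ := by
      push_cast; ring
    rw [this, Complex.exp_add, hexp1, mul_one, sub_self, zero_div]
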